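/- Let n, m ≥ 1 and 0 < δ. Suppose that for each of the nm point-segment pairs, the total length of subsegments lying entirely within distance (1+δ)·δ/(nm) of the point is at most 2(1+δ)·δ/(nm), and that the total length of all subsegments is 1. Then the total length of subsegments at distance at least δ/(nm) from every point is at least 1 − 2δ − 2δ², and hence any flow moving all this mass over distance at least δ/(nm) has cost at least (δ − 2δ² − 2δ³)/(nm). -/
import Mathlib


/-- Lower bound on the minimum-cost flow between `n` weighted points and a
subdivision of `m` segments of total length one: `close p` is the total length of
subsegments lying entirely within distance `(1+δ)·δ/(nm)` of the point of the
point–segment pair `p`, and `far` is the total length of all remaining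
subsegments, i.e. those at distance at least `δ/(nm)` from every point. -/
theorem stmt_17 (n m : ℕ) (hn : 1 ≤ n) (hm : 1 ≤ m) (δ : ℝ) (hδ : 0 < δ)
    (close : Fin n × Fin m → ℝ)
    (hclose0 : ∀ p, 0 ≤ close p)
    (hclose : ∀ p, close p ≤ 2 * (1 + δ) * δ / (n*m))
    (far : ℝ) (hfar : far = 1 - ∑ p, close p) :
    1 - 2*δ - 2*δ^2 ≤ far ∧
      ∀ C : ℝ, far * (δ / (n*m)) ≤ C → (δ - 2*δ^2 - 2*δ^3) / (n*m) ≤ C := by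
  have hnm : (0:ℝ) < (n:ℝ) * m := by positivity
  have hsum : ∑ p, close p ≤ 2*δ + 2*δ^2 := by
    calc ∑ p, close p ≤ ∑ _p : Fin n × Fin m, 2 * (1 + δ) * δ / (n*m) :=
          Finset.sum_le_sum fun p _ => hclose p
      _ = (n*m : ℝ) * (2 * (1 + δ) * δ / (n*m)) := by
          simp [Finset.sum_const, Finset.card_univ, mul_comm]
      _ = 2*δ + 2*δ^2 := by field_simp
  have h1 : 1 - 2*δ - 2*δ^2 ≤ far := by rw [hfar]; linarith
  refine ⟨h1, fun C hC => le_trans ?_ hC⟩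
  rw [div_le_iff₀ hnm] at *
  have : (δ - 2*δ^2 - 2*δ^3) = (1 - 2*δ - 2*δ^2) * δ := by ring
  rw [this]
  have : far * (δ / (n*m)) * (n*m) = far * δ := by field_simp
  rw [this]
  nlinarith [hδ.le]
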